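/- arXiv:1803.04547 — 2 statements merged into one kernel-verified Lean document; each statement's English description precedes it below -/
import Mathlib

section
/- Let X* ∈ KMM(n,d,k), write n_r = n_r(X*) and δ_r = δ_r(X*), and let X̂ ∈ ℝ^{n×d} satisfy ‖X* − X̂‖_F ≤ ε. Let κ ≥ 1. Assume (a) X* has exactly k distinct rows, and (b) there exist constants c_r > 0 with c_r + c_ℓ ≤ 1 for all r ≠ ℓ such that c_r^{-2}·(1+κ)²·ε²/(δ_r²·n_r) < 1 for every r ∈ [k]. Then every κ-approximate k-means solution X̃ for X̂ has exactly k distinct rows and satisfies Mis_r(X*; X̃) ≤ c_r^{-2}·(1+κ)²·ε²/(n_r·δ_r²) for every r ∈ [k]; in particular (with c_r = 1/2), Mis(X*, X̃) ≤ 4(1+κ)²·ε²/(n·δ∧(X*)²). -/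
open Matrix

noncomputable section

/-- Frobenius norm of a real matrix. -/
def frob {m n : Type*} [Fintype m] [Fintype n] (M : Matrix m n ℝ) : ℝ :=
  Real.sqrt (∑ i, ∑ j, (M i j) ^ 2)

/-- Euclidean distance between two vectors. -/
def dist2 {d : Type*} [Fintype d] (u v : d → ℝ) : ℝ :=
  Real.sqrt (∑ j, (u j - v j) ^ 2)

/-- `X` has at most `k` distinct rows (is a k-means matrix). -/
def IsKMM {n d : ℕ} (k : ℕ) (X : Matrix (Fin n) (Fin d) ℝ) : Prop :=
  ∃ g : Fin n → Fin k, ∀ i i', g i = g i' → X i = X i'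

/-- `g` is a labeling consistent with the rows of `X` (same label iff equal rows). -/
def IsLabeling {n d k : ℕ} (X : Matrix (Fin n) (Fin d) ℝ) (g : Fin n → Fin k) : Prop :=
  ∀ i i', g i = g i' ↔ X i = X i'

/-- average misclassification rate between two k-means matrices (min over label matchings). -/
def Mis {n d d' : ℕ} (k : ℕ) (X : Matrix (Fin n) (Fin d) ℝ) (Y : Matrix (Fin n) (Fin d') ℝ) : ℝ :=
  sInf {t | ∃ g g' : Fin n → Fin k, IsLabeling X g ∧ IsLabeling Y g' ∧
    t = (Set.ncard {i | g i ≠ g' i} : ℝ) / n}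

/-- `Xtil` is a κ-approximate k-means solution for `Xhat`. -/
def IsKApprox {n d : ℕ} (k : ℕ) (κ : ℝ) (Xhat Xtil : Matrix (Fin n) (Fin d) ℝ) : Prop :=
  IsKMM k Xtil ∧ ∀ X : Matrix (Fin n) (Fin d) ℝ, IsKMM k X →
    frob (Xhat - Xtil) ≤ κ * frob (Xhat - X)

/-- center separation `δ_r` of the center enumeration `q` at index `r`. -/
def centerSep {d : Type*} [Fintype d] {k : ℕ} (q : Fin k → d → ℝ) (r : Fin k) : ℝ :=
  sInf {t | ∃ ℓ, ℓ ≠ r ∧ t = dist2 (q ℓ) (q r)}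

/-- minimum center separation `δ∧` of the enumeration `q`. -/
def minCenterSep {d : Type*} [Fintype d] {k : ℕ} (q : Fin k → d → ℝ) : ℝ :=
  sInf {t | ∃ r, t = centerSep q r}

lemma dist2_nonneg {d : Type*} [Fintype d] (u v : d → ℝ) : 0 ≤ dist2 u v :=
  Real.sqrt_nonneg _

lemma dist2_eq_dist {d : Type*} [Fintype d] (u v : d → ℝ) :
    dist2 u v = dist ((EuclideanSpace.equiv d ℝ).symm u) ((EuclideanSpace.equiv d ℝ).symm v) := by
  rw [EuclideanSpace.dist_eq]
  simp [dist2, Real.dist_eq, sq_abs]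

lemma dist2_comm {d : Type*} [Fintype d] (u v : d → ℝ) : dist2 u v = dist2 v u := by
  rw [dist2_eq_dist, dist2_eq_dist, dist_comm]

lemma dist2_triangle {d : Type*} [Fintype d] (u v w : d → ℝ) :
    dist2 u w ≤ dist2 u v + dist2 v w := by
  rw [dist2_eq_dist, dist2_eq_dist, dist2_eq_dist]
  exact dist_triangle _ _ _

lemma dist2_pos {d : Type*} [Fintype d] {u v : d → ℝ} (h : u ≠ v) : 0 < dist2 u v := by
  rw [dist2_eq_dist]
  exact dist_pos.mpr (fun hc => h (by simpa using congrArg (EuclideanSpace.equiv d ℝ) hc))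

lemma dist2_sq {d : Type*} [Fintype d] (u v : d → ℝ) :
    dist2 u v ^ 2 = ∑ j, (u j - v j) ^ 2 :=
  Real.sq_sqrt (by positivity)

lemma frob_sub_eq {m n : Type*} [Fintype m] [Fintype n] (A B : Matrix m n ℝ) :
    frob (A - B) = dist2 (fun p : m × n => A p.1 p.2) (fun p : m × n => B p.1 p.2) := by
  simp [frob, dist2, Fintype.sum_prod_type, Matrix.sub_apply]

lemma frob_nonneg {m n : Type*} [Fintype m] [Fintype n] (M : Matrix m n ℝ) : 0 ≤ frob M :=
  Real.sqrt_nonneg _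

lemma frob_sub_comm {m n : Type*} [Fintype m] [Fintype n] (A B : Matrix m n ℝ) :
    frob (A - B) = frob (B - A) := by
  rw [frob_sub_eq, frob_sub_eq, dist2_comm]

lemma frob_sub_triangle {m n : Type*} [Fintype m] [Fintype n] (A B C : Matrix m n ℝ) :
    frob (A - C) ≤ frob (A - B) + frob (B - C) := by
  rw [frob_sub_eq, frob_sub_eq, frob_sub_eq]
  exact dist2_triangle _ _ _

lemma frob_sub_sq {n d : ℕ} (A B : Matrix (Fin n) (Fin d) ℝ) :
    frob (A - B) ^ 2 = ∑ i, ∑ j, (A i j - B i j) ^ 2 := by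
  rw [frob_sub_eq, dist2_sq, Fintype.sum_prod_type]

lemma count_mul_le {n : ℕ} (S : Set (Fin n)) (b : ℝ) (D : Fin n → ℝ) (hD : ∀ i, 0 ≤ D i)
    (hS : ∀ i ∈ S, b ≤ D i) : (S.ncard : ℝ) * b ≤ ∑ i, D i := by
  classical
  have hfin : S.Finite := Set.toFinite S
  calc (S.ncard : ℝ) * b = ∑ _i ∈ hfin.toFinset, b := by
        rw [Finset.sum_const, nsmul_eq_mul, Set.ncard_eq_toFinset_card S hfin]
    _ ≤ ∑ i ∈ hfin.toFinset, D i :=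
        Finset.sum_le_sum (fun i hi => hS i (by simpa using hi))
    _ ≤ ∑ i, D i :=
        Finset.sum_le_sum_of_subset_of_nonneg (Finset.subset_univ _) (fun i _ _ => hD i)

/-- Key construction: given one "good" point per cluster, build the matched labeling of `Xt`. -/
lemma exists_good_labeling {n d k : ℕ} (Xs Xt : Matrix (Fin n) (Fin d) ℝ)
    (q : Fin k → Fin d → ℝ)
    (g0 : Fin n → Fin k) (hg0 : ∀ i i', g0 i = g0 i' → Xt i = Xt i')
    (c δ : Fin k → ℝ) (hδ : ∀ r ℓ, ℓ ≠ r → δ r ≤ dist2 (q ℓ) (q r))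
    (hc_pos : ∀ r, 0 < c r) (hc_sum : ∀ r ℓ, r ≠ ℓ → c r + c ℓ ≤ 1)
    (hgood : ∀ r, ∃ i, Xs i = q r ∧ dist2 (Xt i) (q r) < c r * δ r) :
    ∃ gt : Fin n → Fin k, IsLabeling Xt gt ∧ Function.Surjective gt ∧
      ∀ r i, Xs i = q r → gt i ≠ r → c r * δ r ≤ dist2 (Xt i) (q r) := by
  classical
  choose idx hidx1 hidx2 using hgood
  have hsep : ∀ r ℓ, r ≠ ℓ → ∀ i i' : Fin n, dist2 (Xt i) (q r) < c r * δ r →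
      dist2 (Xt i') (q ℓ) < c ℓ * δ ℓ → Xt i ≠ Xt i' := by
    intro r ℓ hne i i' hi hi' heq
    have h1 : δ r ≤ dist2 (q ℓ) (q r) := hδ r ℓ (Ne.symm hne)
    have h2 : δ ℓ ≤ dist2 (q ℓ) (q r) := by
      rw [dist2_comm]; exact hδ ℓ r hne
    have htri : dist2 (q ℓ) (q r) ≤ dist2 (q ℓ) (Xt i') + dist2 (Xt i') (q r) :=
      dist2_triangle _ _ _
    have heq2 : dist2 (Xt i') (q r) = dist2 (Xt i) (q r) := by rw [heq]
    have h3 : dist2 (q ℓ) (Xt i') = dist2 (Xt i') (q ℓ) := dist2_comm _ _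
    have hs := hc_sum r ℓ hne
    have hcr := hc_pos r
    have hcl := hc_pos ℓ
    have hDq : 0 ≤ dist2 (q ℓ) (q r) := dist2_nonneg _ _
    nlinarith [mul_le_mul_of_nonneg_left h1 hcr.le, mul_le_mul_of_nonneg_left h2 hcl.le,
      mul_le_mul_of_nonneg_right hs hDq]
  have hXtinj : Function.Injective (fun r => Xt (idx r)) := by
    intro r ℓ h
    by_contra hne
    exact hsep r ℓ hne (idx r) (idx ℓ) (hidx2 r) (hidx2 ℓ) h
  have hσinj : Function.Injective (fun r => g0 (idx r)) := by
    intro r ℓ h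
    exact hXtinj (hg0 _ _ h)
  have hσsurj : Function.Surjective (fun r => g0 (idx r)) :=
    Finite.surjective_of_injective hσinj
  have hcov' : ∀ i, ∃ r, Xt i = Xt (idx r) := by
    intro i
    obtain ⟨r, hr⟩ := hσsurj (g0 i)
    exact ⟨r, (hg0 _ _ hr).symm⟩
  set gt : Fin n → Fin k := fun i => (hcov' i).choose with hgt_def
  have hgt : ∀ i, Xt i = Xt (idx (gt i)) := fun i => (hcov' i).choose_spec
  have hlab : IsLabeling Xt gt := by
    intro i i'
    constructor
    · intro h; rw [hgt i, hgt i', h]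
    · intro h
      apply hXtinj
      simp only
      rw [← hgt i, ← hgt i', h]
  have hsurj : Function.Surjective gt := by
    intro r
    exact ⟨idx r, (hXtinj (hgt (idx r))).symm⟩
  refine ⟨gt, hlab, hsurj, ?_⟩
  intro r i hXsi hne
  by_contra hlt
  push_neg at hlt
  have h1 : Xt i ≠ Xt (idx (gt i)) :=
    hsep r (gt i) (Ne.symm hne) i (idx (gt i)) hlt (hidx2 (gt i))
  exact h1 (hgt i)

/-- Corollary 3.1: misclassification rate of κ-approximate k-means solutions based on an
approximation `X̂` of the k-means matrix `X*` (whose clusters are enumerated by the injective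
center map `q`).  The first conclusion gives the per-cluster bound via the optimal matching
`gt`; the second gives the average bound when condition (b) also holds with `c_r = 1/2`. -/
theorem stmt4 (n d k : ℕ)
    (Xs : Matrix (Fin n) (Fin d) ℝ)
    (q : Fin k → Fin d → ℝ) (hq_inj : Function.Injective q)
    (hq_cov : ∀ i, ∃ r, Xs i = q r)
    -- (a) `X*` has exactly `k` distinct rows:
    (hq_surj : ∀ r, ∃ i, Xs i = q r)
    (Xhat : Matrix (Fin n) (Fin d) ℝ)
    (ε : ℝ) (hε : frob (Xs - Xhat) ≤ ε)
    (κ : ℝ) (hκ : 1 ≤ κ)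
    (c : Fin k → ℝ) (hc_pos : ∀ r, 0 < c r)
    (hc_sum : ∀ r ℓ, r ≠ ℓ → c r + c ℓ ≤ 1)
    -- (b)
    (hb : ∀ r, ((c r)⁻¹) ^ 2 * (1 + κ) ^ 2 * ε ^ 2 /
        ((centerSep q r) ^ 2 * (Set.ncard {i | Xs i = q r} : ℝ)) < 1) :
    ∀ Xt : Matrix (Fin n) (Fin d) ℝ, IsKApprox k κ Xhat Xt →
      (∃ gt : Fin n → Fin k, IsLabeling Xt gt ∧ Function.Surjective gt ∧
        ∀ r, (Set.ncard {i | Xs i = q r ∧ gt i ≠ r} : ℝ) /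
            (Set.ncard {i | Xs i = q r} : ℝ) ≤
          ((c r)⁻¹) ^ 2 * (1 + κ) ^ 2 * ε ^ 2 /
            ((Set.ncard {i | Xs i = q r} : ℝ) * (centerSep q r) ^ 2)) ∧
      ((∀ r, 4 * (1 + κ) ^ 2 * ε ^ 2 /
          ((centerSep q r) ^ 2 * (Set.ncard {i | Xs i = q r} : ℝ)) < 1) →
        Mis k Xs Xt ≤ 4 * (1 + κ) ^ 2 * ε ^ 2 / (n * (minCenterSep q) ^ 2)) := by
  classical
  intro Xt hXt
  have hbdd : BddBelow {t : ℝ | ∃ g g' : Fin n → Fin k, IsLabeling Xs g ∧ IsLabeling Xt g' ∧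
      t = (Set.ncard {i | g i ≠ g' i} : ℝ) / n} := by
    refine ⟨0, fun t ht => ?_⟩
    obtain ⟨g, g', _, _, rfl⟩ := ht
    positivity
  rcases Nat.eq_zero_or_pos k with hk0 | hk_pos
  · -- degenerate case k = 0 (forces n = 0)
    subst hk0
    have hne : IsEmpty (Fin n) := ⟨fun i => (hq_cov i).choose.elim0⟩
    have hn0 : (n : ℝ) = 0 := by
      have : n = 0 := by
        by_contra h
        exact hne.false ⟨0, Nat.pos_of_ne_zero h⟩
      simp [this]
    refine ⟨⟨fun i => (hq_cov i).choose, fun i => hne.elim i, fun r => r.elim0,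
      fun r => r.elim0⟩, ?_⟩
    intro _
    have hmem : (0:ℝ) ∈ {t : ℝ | ∃ g g' : Fin n → Fin 0, IsLabeling Xs g ∧ IsLabeling Xt g' ∧
        t = (Set.ncard {i | g i ≠ g' i} : ℝ) / n} := by
      refine ⟨fun i => hne.elim i, fun i => hne.elim i, fun i => hne.elim i,
        fun i => hne.elim i, ?_⟩
      rw [Set.eq_empty_of_isEmpty {i | (fun i => hne.elim i : Fin n → Fin 0) i ≠
        (fun i => hne.elim i : Fin n → Fin 0) i}]
      simp
    have h1 : Mis 0 Xs Xt ≤ 0 := csInf_le hbdd hmem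
    rw [hn0] at *
    simpa using h1.trans (by norm_num)
  -- now k ≥ 1
  obtain ⟨g0, hg0⟩ := hXt.1
  choose g hg using hq_cov
  have hlabXs : IsLabeling Xs g := by
    intro i i'
    constructor
    · intro h; rw [hg i, hg i', h]
    · intro h; exact hq_inj (by rw [← hg i, ← hg i', h])
  have hε0 : 0 ≤ ε := le_trans (frob_nonneg _) hε
  have hIsKMMXs : IsKMM k Xs := ⟨g, fun i i' h => by rw [hg i, hg i', h]⟩
  have hfrob : frob (Xs - Xt) ≤ (1 + κ) * ε := by
    have h1 := hXt.2 Xs hIsKMMXs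
    have h2 : frob (Xhat - Xs) = frob (Xs - Xhat) := frob_sub_comm _ _
    have h3 := frob_sub_triangle Xs Xhat Xt
    have h4 : frob (Xhat - Xt) ≤ κ * ε := by
      calc frob (Xhat - Xt) ≤ κ * frob (Xhat - Xs) := h1
        _ ≤ κ * ε := by rw [h2]; exact mul_le_mul_of_nonneg_left hε (by linarith)
    nlinarith
  set D : Fin n → ℝ := fun i => ∑ j, (Xs i j - Xt i j) ^ 2 with hD_def
  have hD_nonneg : ∀ i, 0 ≤ D i := fun i => by positivity
  have hsumD : ∑ i, D i ≤ (1 + κ) ^ 2 * ε ^ 2 := by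
    have h1 : ∑ i, D i = frob (Xs - Xt) ^ 2 := (frob_sub_sq Xs Xt).symm
    rw [h1]
    calc frob (Xs - Xt) ^ 2 ≤ ((1 + κ) * ε) ^ 2 :=
          pow_le_pow_left₀ (frob_nonneg _) hfrob 2
      _ = (1 + κ) ^ 2 * ε ^ 2 := by ring
  have hD_eq : ∀ i r, Xs i = q r → D i = dist2 (Xt i) (q r) ^ 2 := by
    intro i r h
    rw [dist2_sq, hD_def]
    simp only
    rw [← h]
    exact Finset.sum_congr rfl (fun j _ => by ring)
  have hnr_pos : ∀ r, 0 < (Set.ncard {i | Xs i = q r} : ℝ) := by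
    intro r
    obtain ⟨i, hi⟩ := hq_surj r
    have h1 : 0 < Set.ncard {i | Xs i = q r} :=
      (Set.ncard_pos (Set.toFinite _)).mpr ⟨i, hi⟩
    exact_mod_cast h1
  have hn_pos : 0 < (n : ℝ) := by
    obtain ⟨i, _⟩ := hq_surj ⟨0, hk_pos⟩
    exact_mod_cast i.pos
  by_cases hk2 : 2 ≤ k
  · -- main case, k ≥ 2
    haveI : Nontrivial (Fin k) := Fin.nontrivial_iff_two_le.mpr hk2
    have hfinS : ∀ r : Fin k, {t : ℝ | ∃ ℓ, ℓ ≠ r ∧ t = dist2 (q ℓ) (q r)}.Finite := by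
      intro r
      apply Set.Finite.subset (Set.Finite.image (fun ℓ => dist2 (q ℓ) (q r)) Set.finite_univ)
      rintro t ⟨ℓ, _, rfl⟩
      exact ⟨ℓ, trivial, rfl⟩
    have hδ_mem : ∀ r, ∃ ℓ, ℓ ≠ r ∧ centerSep q r = dist2 (q ℓ) (q r) := by
      intro r
      obtain ⟨ℓ0, hℓ0⟩ := exists_ne r
      have hne : {t : ℝ | ∃ ℓ, ℓ ≠ r ∧ t = dist2 (q ℓ) (q r)}.Nonempty :=
        ⟨dist2 (q ℓ0) (q r), ℓ0, hℓ0, rfl⟩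
      exact hne.csInf_mem (hfinS r)
    have hδ_pos : ∀ r, 0 < centerSep q r := by
      intro r
      obtain ⟨ℓ, h1, h2⟩ := hδ_mem r
      rw [h2]
      exact dist2_pos (fun hc => h1 (hq_inj hc))
    have hδ_le : ∀ r ℓ, ℓ ≠ r → centerSep q r ≤ dist2 (q ℓ) (q r) := by
      intro r ℓ h
      exact csInf_le (hfinS r).bddBelow ⟨ℓ, h, rfl⟩
    -- existence of good points, for any constant vector cc
    have hgood : ∀ cc : Fin k → ℝ, (∀ r, 0 < cc r) →
        (∀ r, (1 + κ) ^ 2 * ε ^ 2 <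
          (cc r) ^ 2 * (centerSep q r) ^ 2 * (Set.ncard {i | Xs i = q r} : ℝ)) →
        ∀ r, ∃ i, Xs i = q r ∧ dist2 (Xt i) (q r) < cc r * centerSep q r := by
      intro cc hccpos hstrict r
      by_contra hcon
      push_neg at hcon
      have hbound : ∀ i ∈ {i | Xs i = q r}, (cc r * centerSep q r) ^ 2 ≤ D i := by
        intro i hi
        rw [hD_eq i r hi]
        exact pow_le_pow_left₀ (mul_nonneg (hccpos r).le (hδ_pos r).le) (hcon i hi) 2
      have hcnt := count_mul_le _ _ D hD_nonneg hbound
      nlinarith [hstrict r, hsumD]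
    have hstrict_c : ∀ r, (1 + κ) ^ 2 * ε ^ 2 <
        (c r) ^ 2 * (centerSep q r) ^ 2 * (Set.ncard {i | Xs i = q r} : ℝ) := by
      intro r
      have hpos : 0 < (centerSep q r) ^ 2 * (Set.ncard {i | Xs i = q r} : ℝ) :=
        mul_pos (pow_pos (hδ_pos r) 2) (hnr_pos r)
      have h2 := (div_lt_one hpos).mp (hb r)
      have hcc : (c r) ^ 2 * ((c r)⁻¹) ^ 2 = 1 := by
        rw [← mul_pow, mul_inv_cancel₀ (hc_pos r).ne', one_pow]
      calc (1 + κ) ^ 2 * ε ^ 2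
          = ((c r) ^ 2 * ((c r)⁻¹) ^ 2) * ((1 + κ) ^ 2 * ε ^ 2) := by rw [hcc]; ring
        _ = (c r) ^ 2 * (((c r)⁻¹) ^ 2 * (1 + κ) ^ 2 * ε ^ 2) := by ring
        _ < (c r) ^ 2 * ((centerSep q r) ^ 2 * (Set.ncard {i | Xs i = q r} : ℝ)) :=
            mul_lt_mul_of_pos_left h2 (pow_pos (hc_pos r) 2)
        _ = _ := by ring
    obtain ⟨gt, hlabgt, hsurjgt, hprop⟩ := exists_good_labeling Xs Xt q g0 hg0 c (centerSep q)
      hδ_le hc_pos hc_sum (hgood c hc_pos hstrict_c)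
    constructor
    · refine ⟨gt, hlabgt, hsurjgt, ?_⟩
      intro r
      have hbound : ∀ i ∈ {i | Xs i = q r ∧ gt i ≠ r}, (c r * centerSep q r) ^ 2 ≤ D i := by
        rintro i ⟨hi1, hi2⟩
        rw [hD_eq i r hi1]
        exact pow_le_pow_left₀ (mul_nonneg (hc_pos r).le (hδ_pos r).le) (hprop r i hi1 hi2) 2
      have hcnt := count_mul_le _ _ D hD_nonneg hbound
      have hT : (Set.ncard {i | Xs i = q r ∧ gt i ≠ r} : ℝ) * (c r * centerSep q r) ^ 2 ≤
          (1 + κ) ^ 2 * ε ^ 2 := le_trans hcnt hsumD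
      have hcc : (c r) ^ 2 * ((c r)⁻¹) ^ 2 = 1 := by
        rw [← mul_pow, mul_inv_cancel₀ (hc_pos r).ne', one_pow]
      have hkey : (Set.ncard {i | Xs i = q r ∧ gt i ≠ r} : ℝ) * (centerSep q r) ^ 2 ≤
          ((c r)⁻¹) ^ 2 * (1 + κ) ^ 2 * ε ^ 2 := by
        have h4 := mul_le_mul_of_nonneg_left hT
          (by positivity : (0:ℝ) ≤ ((c r)⁻¹) ^ 2)
        calc (Set.ncard {i | Xs i = q r ∧ gt i ≠ r} : ℝ) * (centerSep q r) ^ 2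
            = ((c r) ^ 2 * ((c r)⁻¹) ^ 2) *
              ((Set.ncard {i | Xs i = q r ∧ gt i ≠ r} : ℝ) * (centerSep q r) ^ 2) := by
              rw [hcc]; ring
          _ = ((c r)⁻¹) ^ 2 *
              ((Set.ncard {i | Xs i = q r ∧ gt i ≠ r} : ℝ) * (c r * centerSep q r) ^ 2) := by
              ring
          _ ≤ ((c r)⁻¹) ^ 2 * ((1 + κ) ^ 2 * ε ^ 2) := h4
          _ = _ := by ring
      rw [div_le_div_iff₀ (hnr_pos r) (mul_pos (hnr_pos r) (pow_pos (hδ_pos r) 2))]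
      calc (Set.ncard {i | Xs i = q r ∧ gt i ≠ r} : ℝ) *
            ((Set.ncard {i | Xs i = q r} : ℝ) * (centerSep q r) ^ 2)
          = ((Set.ncard {i | Xs i = q r ∧ gt i ≠ r} : ℝ) * (centerSep q r) ^ 2) *
            (Set.ncard {i | Xs i = q r} : ℝ) := by ring
        _ ≤ (((c r)⁻¹) ^ 2 * (1 + κ) ^ 2 * ε ^ 2) * (Set.ncard {i | Xs i = q r} : ℝ) :=
            mul_le_mul_of_nonneg_right hkey (hnr_pos r).le
    · -- average bound
      intro h4
      have hstrict_half : ∀ r, (1 + κ) ^ 2 * ε ^ 2 <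
          ((1:ℝ)/2) ^ 2 * (centerSep q r) ^ 2 * (Set.ncard {i | Xs i = q r} : ℝ) := by
        intro r
        have hpos : 0 < (centerSep q r) ^ 2 * (Set.ncard {i | Xs i = q r} : ℝ) :=
          mul_pos (pow_pos (hδ_pos r) 2) (hnr_pos r)
        have h2 := (div_lt_one hpos).mp (h4 r)
        nlinarith
      obtain ⟨gt', hlabgt', _, hprop'⟩ := exists_good_labeling Xs Xt q g0 hg0
        (fun _ => (1:ℝ)/2) (centerSep q) hδ_le (fun _ => by norm_num)
        (fun r ℓ _ => by norm_num)
        (hgood (fun _ => (1:ℝ)/2) (fun _ => by norm_num) hstrict_half)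
      have hδm_le : ∀ r, minCenterSep q ≤ centerSep q r := by
        intro r
        apply csInf_le
        · apply Set.Finite.bddBelow
          apply Set.Finite.subset (Set.Finite.image (centerSep q) Set.finite_univ)
          rintro t ⟨r', rfl⟩
          exact ⟨r', trivial, rfl⟩
        · exact ⟨r, rfl⟩
      have hδm_pos : 0 < minCenterSep q := by
        have hfin : {t : ℝ | ∃ r, t = centerSep q r}.Finite := by
          apply Set.Finite.subset (Set.Finite.image (centerSep q) Set.finite_univ)
          rintro t ⟨r', rfl⟩
          exact ⟨r', trivial, rfl⟩
        have hne : {t : ℝ | ∃ r, t = centerSep q r}.Nonempty := ⟨centerSep q ⟨0, hk_pos⟩, _, rfl⟩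
        obtain ⟨r0, hr0⟩ := hne.csInf_mem hfin
        rw [minCenterSep, hr0]
        exact hδ_pos r0
      have hbound : ∀ i ∈ {i | g i ≠ gt' i}, ((1:ℝ)/2 * minCenterSep q) ^ 2 ≤ D i := by
        intro i hi
        have hXsi := hg i
        have h5 : (1:ℝ)/2 * centerSep q (g i) ≤ dist2 (Xt i) (q (g i)) :=
          hprop' (g i) i hXsi (Ne.symm hi)
        rw [hD_eq i (g i) hXsi]
        apply pow_le_pow_left₀ (mul_nonneg (by norm_num) hδm_pos.le)
        calc (1:ℝ)/2 * minCenterSep q ≤ (1:ℝ)/2 * centerSep q (g i) := by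
              linarith [hδm_le (g i)]
          _ ≤ dist2 (Xt i) (q (g i)) := h5
      have hcnt := count_mul_le _ _ D hD_nonneg hbound
      have hT : (Set.ncard {i | g i ≠ gt' i} : ℝ) * ((1:ℝ)/2 * minCenterSep q) ^ 2 ≤
          (1 + κ) ^ 2 * ε ^ 2 := le_trans hcnt hsumD
      have hmem : ((Set.ncard {i | g i ≠ gt' i} : ℝ) / n) ∈
          {t : ℝ | ∃ g g' : Fin n → Fin k, IsLabeling Xs g ∧ IsLabeling Xt g' ∧
            t = (Set.ncard {i | g i ≠ g' i} : ℝ) / n} := ⟨g, gt', hlabXs, hlabgt', rfl⟩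
      have h6 : Mis k Xs Xt ≤ (Set.ncard {i | g i ≠ gt' i} : ℝ) / n := csInf_le hbdd hmem
      refine h6.trans ?_
      rw [div_le_div_iff₀ hn_pos (mul_pos hn_pos (pow_pos hδm_pos 2))]
      nlinarith [mul_le_mul_of_nonneg_right hT hn_pos.le]
  · -- case k = 1
    have hk1 : k = 1 := by omega
    subst hk1
    have hXt_const : ∀ i i', Xt i = Xt i' := fun i i' => hg0 i i' (Subsingleton.elim _ _)
    have hlabgt : IsLabeling Xt (fun _ => (0 : Fin 1)) := by
      intro i i'
      simp [hXt_const i i']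
    constructor
    · refine ⟨fun _ => 0, hlabgt, fun r => ⟨(hq_surj r).choose, Subsingleton.elim _ _⟩, ?_⟩
      intro r
      have hempty : {i | Xs i = q r ∧ (fun _ => (0 : Fin 1)) i ≠ r} = ∅ := by
        ext i
        simp [Subsingleton.elim (0 : Fin 1) r]
      rw [hempty]
      simp only [Set.ncard_empty, Nat.cast_zero, zero_div]
      positivity
    · intro _
      have hempty : {i | g i ≠ (fun _ => (0 : Fin 1)) i} = ∅ := by
        ext i
        simp [Subsingleton.elim (g i) (0 : Fin 1)]
      have hmem : (0:ℝ) ∈ {t : ℝ | ∃ g g' : Fin n → Fin 1, IsLabeling Xs g ∧ IsLabeling Xt g' ∧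
          t = (Set.ncard {i | g i ≠ g' i} : ℝ) / n} := by
        refine ⟨g, fun _ => 0, hlabXs, hlabgt, ?_⟩
        rw [hempty]
        simp
      have h1 : Mis 1 Xs Xt ≤ 0 := csInf_le hbdd hmem
      refine h1.trans ?_
      positivity

end
end

section
/- Deterministic form of the mean-parameter corollary for SC-RR: consider the SBM mean structure with k = min(k1,k2) and α = n2/n1, define the row mean parameters Λ_{sℓ} = B_{sℓ}·n_{2ℓ} for (s,ℓ) ∈ [k1]×[k2], the minimum separation Λ∧² = min_{s≠t} ‖Λ_{s*} − Λ_{t*}‖_2², and d = √(n2/n1)·‖Ψ‖_∞. Assume π_{rt} ≥ 1/(β_r·k_r) for all t and r = 1,2 (β_r ≥ 1), let A_re ∈ ℝ^{n1×n2} satisfy ‖A_re − P‖_op ≤ C·√d for some C > 0, let M be a best rank-k approximation of A_re (rank(M) ≤ k, ‖M − A_re‖_op ≤ σ_{k+1}(A_re)), let κ ≥ 1, and suppose 32·C²·(1+κ)²·β1·β2·k·k1·k2·α·‖Λ‖_∞ < Λ∧². Then every κ-approximate k-means solution X̃ ∈ KMM(n1,n2,k1) for M satisfies Mis(X̃, P)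 ≤ 32·C²·(1+κ)²·β2·k·k2·α·‖Λ‖_∞/Λ∧². -/
open Matrix

noncomputable section

/-- ℓ2→ℓ2 operator norm of a real matrix: sup of ‖Mx‖₂ over the ℓ2 unit ball. -/
def opNorm {m n : Type*} [Fintype m] [Fintype n] (M : Matrix m n ℝ) : ℝ :=
  sSup {t | ∃ x : n → ℝ, ∑ j, (x j) ^ 2 ≤ 1 ∧ t = Real.sqrt (∑ i, (M.mulVec x i) ^ 2)}

/-- `Z` is a membership matrix: 0/1 entries, exactly one 1 per row. -/
def IsMembership {n k : ℕ} (Z : Matrix (Fin n) (Fin k) ℝ) : Prop :=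
  (∀ i j, Z i j = 0 ∨ Z i j = 1) ∧ ∀ i, ∃! j, Z i j = 1

/-- size of the `j`-th cluster of a membership matrix. -/
def clusterSize {n k : ℕ} (Z : Matrix (Fin n) (Fin k) ℝ) (j : Fin k) : ℕ :=
  Set.ncard {i | Z i j = 1}

/-- `σ_{k+1}(A)` via the Eckart–Young–Mirsky characterization. -/
def svalSucc {m n : ℕ} (A : Matrix (Fin m) (Fin n) ℝ) (k : ℕ) : ℝ :=
  sInf {t | ∃ N : Matrix (Fin m) (Fin n) ℝ, N.rank ≤ k ∧ t = opNorm (A - N)}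

/-!
Since `P` has rank at most `k = min k1 k2`, the best rank-`k` approximation `M` of `A_re` satisfies
`‖M - P‖_op ≤ 2 ‖A_re - P‖_op`, and `M - P` has rank at most `2k`, so
`‖M - P‖_F² ≤ 8k ‖A_re - P‖_op²`. As `P` is itself a `k1`-means matrix,
`‖X̃ - P‖_F ≤ (1 + κ) ‖M - P‖_F`. Rows of `P` in different clusters are at squared distance at
least `Λ∧²/n2`, so by Markov's inequality at most `4 n2 ‖X̃ - P‖_F² / Λ∧²` rows of `X̃` lie at
distance `≥ √(Λ∧²/n2) / 2` from the corresponding row of `P`. The hypothesis makes this smaller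
than every cluster of `P`, so each cluster keeps a well-approximated row, and these representatives
force the clustering of `X̃` to agree with that of `P` outside the badly approximated rows.
-/

open Module

section Norms

variable {m n : Type*} [Fintype m] [Fintype n]

lemma norm_toLp_eq_sqrt_sum_sq (x : n → ℝ) : ‖WithLp.toLp 2 x‖ = √(∑ j, x j ^ 2) := by
  simp [EuclideanSpace.norm_eq, sq_abs]

lemma norm_toLp_sq (x : n → ℝ) : ‖WithLp.toLp 2 x‖ ^ 2 = ∑ j, x j ^ 2 := by
  rw [norm_toLp_eq_sqrt_sum_sq, Real.sq_sqrt (by positivity)]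

lemma dist_toLp_eq_sqrt_sum_sq (x y : n → ℝ) :
    dist (WithLp.toLp 2 x) (WithLp.toLp 2 y) = √(∑ j, (x j - y j) ^ 2) := by
  simp [EuclideanSpace.dist_eq, Real.dist_eq, sq_abs]

open scoped Matrix.Norms.Frobenius in
lemma frob_eq_norm (A : Matrix m n ℝ) : frob A = ‖A‖ := by
  simp [frob, frobenius_norm_def, Real.sqrt_eq_rpow, sq_abs]

lemma frob_sq (A : Matrix m n ℝ) : frob A ^ 2 = ∑ i, ∑ j, A i j ^ 2 :=
  Real.sq_sqrt (by positivity)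

lemma finrank_span_rows_eq_rank (A : Matrix m n ℝ) :
    finrank ℝ (Submodule.span ℝ (Set.range fun i => WithLp.toLp 2 (A i) : Set (EuclideanSpace ℝ n)))
      = A.rank := by
  rw [A.rank_eq_finrank_span_row, ← (WithLp.linearEquiv 2 ℝ (n → ℝ)).symm.finrank_map_eq,
    Submodule.map_span, ← Set.range_comp]
  rfl

lemma opNorm_nonneg (A : Matrix m n ℝ) : 0 ≤ opNorm A :=
  Real.sSup_nonneg (by rintro _ ⟨x, -, rfl⟩; exact Real.sqrt_nonneg _)

variable [DecidableEq n]

open scoped Matrix.Norms.L2Operator in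
lemma opNorm_eq_norm (A : Matrix m n ℝ) : opNorm A = ‖A‖ := by
  rw [opNorm, l2_opNorm_def, ← ContinuousLinearMap.sSup_unitClosedBall_eq_norm]
  congr 1
  ext t
  simp only [Set.mem_ofPred_eq, Set.mem_image, Metric.mem_closedBall, dist_zero_right]
  constructor
  · rintro ⟨x, hx, rfl⟩
    exact ⟨WithLp.toLp 2 x, by simpa [norm_toLp_eq_sqrt_sum_sq],
      by simp [norm_toLp_eq_sqrt_sum_sq]⟩
  · rintro ⟨x, hx, rfl⟩
    refine ⟨x.ofLp, ?_, ?_⟩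
    · rwa [← Real.sqrt_le_one, ← norm_toLp_eq_sqrt_sum_sq, WithLp.toLp_ofLp]
    · rw [← norm_toLp_eq_sqrt_sum_sq]; rfl

open scoped Matrix.Norms.L2Operator in
lemma sum_sq_mulVec_le_opNorm_sq_mul (A : Matrix m n ℝ) (x : n → ℝ) :
    ∑ i, (A *ᵥ x) i ^ 2 ≤ opNorm A ^ 2 * ∑ j, x j ^ 2 := by
  have h := pow_le_pow_left₀ (norm_nonneg _) (A.l2_opNorm_mulVec (WithLp.toLp 2 x)) 2
  rw [mul_pow, ← opNorm_eq_norm] at h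
  simpa [EuclideanSpace.norm_sq_eq] using h

lemma frob_sq_le_rank_mul_opNorm_sq (A : Matrix m n ℝ) :
    frob A ^ 2 ≤ A.rank * opNorm A ^ 2 := by
  set V := Submodule.span ℝ (Set.range fun i => WithLp.toLp 2 (A i) : Set (EuclideanSpace ℝ n))
  let b := stdOrthonormalBasis ℝ V
  set u : Fin (finrank ℝ V) → n → ℝ := fun l => (b l : EuclideanSpace ℝ n).ofLp
  -- Parseval's identity in the row space `V`
  have hrow : ∀ i, ∑ j, A i j ^ 2 = ∑ l, (A *ᵥ u l) i ^ 2 := by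
    intro i
    have hmem : WithLp.toLp 2 (A i) ∈ V := Submodule.subset_span ⟨i, rfl⟩
    rw [← norm_toLp_sq, ← Submodule.coe_mk _ hmem, ← Submodule.coe_norm, ← b.sum_sq_inner_right]
    refine Finset.sum_congr rfl fun l _ => ?_
    simp [u, Submodule.coe_inner, PiLp.inner_apply, mulVec, dotProduct]
  have hcol : ∀ l, ∑ i, (A *ᵥ u l) i ^ 2 ≤ opNorm A ^ 2 := by
    intro l
    have h := sum_sq_mulVec_le_opNorm_sq_mul A (u l)
    rwa [← norm_toLp_sq (u l), WithLp.toLp_ofLp, ← Submodule.coe_norm, b.orthonormal.1 l,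
      one_pow, mul_one] at h
  calc frob A ^ 2 = ∑ i, ∑ l, (A *ᵥ u l) i ^ 2 := by
        rw [frob_sq]; exact Finset.sum_congr rfl fun i _ => hrow i
    _ = ∑ l, ∑ i, (A *ᵥ u l) i ^ 2 := Finset.sum_comm
    _ ≤ ∑ _l : Fin (finrank ℝ V), opNorm A ^ 2 := Finset.sum_le_sum fun l _ => hcol l
    _ = A.rank * opNorm A ^ 2 := by simp [V, finrank_span_rows_eq_rank]

end Norms

section LowRank

lemma rank_sub_le {ι κ : Type*} [Finite ι] [Fintype κ] (A B : Matrix ι κ ℝ) :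
    (A - B).rank ≤ A.rank + B.rank := by
  have h : LinearMap.range (A - B).mulVecLin ≤
      LinearMap.range A.mulVecLin ⊔ LinearMap.range B.mulVecLin := by
    rintro _ ⟨v, rfl⟩
    rw [mulVecLin_apply, sub_mulVec]
    exact Submodule.sub_mem_sup ⟨v, rfl⟩ ⟨v, rfl⟩
  exact (Submodule.finrank_mono h).trans (Submodule.finrank_add_le_finrank_add_finrank _ _)

variable {m n : ℕ}

open scoped Matrix.Norms.L2Operator in
lemma opNorm_sub_le_two_mul {k : ℕ} {A M N : Matrix (Fin m) (Fin n) ℝ}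
    (hM : opNorm (M - A) ≤ svalSucc A k) (hN : N.rank ≤ k) :
    opNorm (M - N) ≤ 2 * opNorm (A - N) := by
  have hsval : svalSucc A k ≤ opNorm (A - N) :=
    csInf_le ⟨0, by rintro _ ⟨N, -, rfl⟩; exact opNorm_nonneg _⟩ ⟨N, hN, rfl⟩
  simp only [opNorm_eq_norm] at *
  linarith [norm_sub_le_norm_sub_add_norm_sub M A N]

open scoped Matrix.Norms.Frobenius in
lemma IsKApprox.frob_sub_le {k : ℕ} {κ : ℝ} {Xhat Xt X : Matrix (Fin m) (Fin n) ℝ}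
    (hXt : IsKApprox k κ Xhat Xt) (hX : IsKMM k X) :
    frob (Xt - X) ≤ (1 + κ) * frob (Xhat - X) := by
  have h := hXt.2 X hX
  simp only [frob_eq_norm] at *
  linarith [norm_sub_le_norm_sub_add_norm_sub Xt Xhat X, norm_sub_rev Xt Xhat]

lemma frob_sq_sub_le_of_isKApprox {k k' : ℕ} {κ : ℝ} (hκ : 0 ≤ κ)
    {A M N Xt : Matrix (Fin m) (Fin n) ℝ} (hMrank : M.rank ≤ k)
    (hMbest : opNorm (M - A) ≤ svalSucc A k) (hNrank : N.rank ≤ k) (hN : IsKMM k' N)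
    (hXt : IsKApprox k' κ M Xt) :
    frob (Xt - N) ^ 2 ≤ 8 * (1 + κ) ^ 2 * k * opNorm (A - N) ^ 2 := by
  have hMN : frob (M - N) ^ 2 ≤ (2 * k) * (2 * opNorm (A - N)) ^ 2 :=
    calc frob (M - N) ^ 2 ≤ (M - N).rank * opNorm (M - N) ^ 2 := frob_sq_le_rank_mul_opNorm_sq _
      _ ≤ (2 * k) * (2 * opNorm (A - N)) ^ 2 := by
        gcongr
        · exact_mod_cast (rank_sub_le M N).trans (by omega)
        · exact opNorm_nonneg _
        · exact opNorm_sub_le_two_mul hMbest hNrank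
  calc frob (Xt - N) ^ 2 ≤ ((1 + κ) * frob (M - N)) ^ 2 :=
        pow_le_pow_left₀ (Real.sqrt_nonneg _) (hXt.frob_sub_le hN) 2
    _ = (1 + κ) ^ 2 * frob (M - N) ^ 2 := mul_pow _ _ _
    _ ≤ (1 + κ) ^ 2 * ((2 * k) * (2 * opNorm (A - N)) ^ 2) := by gcongr
    _ = 8 * (1 + κ) ^ 2 * k * opNorm (A - N) ^ 2 := by ring

lemma sq_le_mul_of_le_mul_sqrt {x C d b : ℝ} (hx : 0 ≤ x) (h : x ≤ C * √d) (hd : d ≤ b)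
    (hb : 0 ≤ b) : x ^ 2 ≤ C ^ 2 * b :=
  calc x ^ 2 ≤ (C * √d) ^ 2 := pow_le_pow_left₀ hx h 2
    _ = C ^ 2 * √d ^ 2 := mul_pow _ _ _
    _ ≤ C ^ 2 * √b ^ 2 := by gcongr
    _ = C ^ 2 * b := by rw [Real.sq_sqrt hb]

end LowRank

section Clustering

open Finset

lemma exists_labeling_eq_of_dist_lt {ι E α : Type*} [PseudoMetricSpace E] [Finite α]
    {x y : ι → E} {g₀ g : ι → α} (hx : ∀ i i', g₀ i = g₀ i' → x i = x i') {δ : ℝ}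
    (hsep : ∀ i i', g i ≠ g i' → δ ≤ dist (y i) (y i')) {S : Set ι}
    (hS : ∀ i ∉ S, dist (x i) (y i) < δ / 2) (hrep : ∀ a, ∃ i ∉ S, g i = a) :
    ∃ g' : ι → α, (∀ i i', g' i = g' i' ↔ x i = x i') ∧ ∀ i ∉ S, g' i = g i := by
  have hgood : ∀ i ∉ S, ∀ j ∉ S, x i = x j → g i = g j := by
    intro i hi j hj hij
    by_contra hne
    have hxx : dist (x i) (x j) = 0 := by rw [hij, dist_self]
    linarith [dist_triangle4 (y i) (x i) (x j) (y j), dist_comm (y i) (x i), hsep i j hne,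
      hS i hi, hS j hj]
  choose rep hrepS hrepg using hrep
  -- the representatives lie in distinct `g₀`-clusters, so they meet every `g₀`-cluster
  have hinj : Function.Injective (g₀ ∘ rep) := fun a b h => by
    rw [← hrepg a, ← hrepg b]; exact hgood _ (hrepS a) _ (hrepS b) (hx _ _ h)
  let σ := Equiv.ofBijective _ (Finite.injective_iff_bijective.1 hinj)
  have hxrep : ∀ i, x (rep (σ.symm (g₀ i))) = x i := fun i => hx _ _ (σ.apply_symm_apply (g₀ i))
  refine ⟨fun i => σ.symm (g₀ i), fun i i' => ⟨fun h => ?_, fun h => ?_⟩, fun i hi => ?_⟩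
  · rw [← hxrep i, ← hxrep i']; exact congrArg (x ∘ rep) h
  · have := hgood _ (hrepS _) _ (hrepS _) ((hxrep i).trans (h.trans (hxrep i').symm))
    rwa [hrepg, hrepg] at this
  · have := hgood _ (hrepS _) i hi (hxrep i)
    rwa [hrepg] at this

lemma pos_of_le_div {a x : ℝ} {n : ℕ} (ha : 0 < a) (h : a ≤ x / n) : 0 < n := by
  rcases Nat.eq_zero_or_pos n with rfl | hn
  · simp at h; linarith
  · exact hn

lemma Mis_le_of_isLabeling {n d d' k : ℕ} {X : Matrix (Fin n) (Fin d) ℝ}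
    {Y : Matrix (Fin n) (Fin d') ℝ} {g g' : Fin n → Fin k} (hg : IsLabeling X g)
    (hg' : IsLabeling Y g') : Mis k X Y ≤ (Set.ncard {i | g i ≠ g' i} : ℝ) / n :=
  csInf_le ⟨0, by rintro _ ⟨_, _, -, -, rfl⟩; positivity⟩ ⟨g, g', hg, hg', rfl⟩

lemma card_far_rows_le {n d : ℕ} (X Y : Matrix (Fin n) (Fin d) ℝ) {D : ℝ} (hD : 0 < D) :
    (#{i | √D / 2 ≤ dist (WithLp.toLp 2 (X i)) (WithLp.toLp 2 (Y i))} : ℝ) ≤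
      4 * frob (X - Y) ^ 2 / D := by
  set x := fun i => WithLp.toLp 2 (X i)
  set y := fun i => WithLp.toLp 2 (Y i)
  have hdist : ∀ i, dist (x i) (y i) ^ 2 = ∑ j, (X i j - Y i j) ^ 2 := fun i => by
    rw [dist_toLp_eq_sqrt_sum_sq, Real.sq_sqrt (by positivity)]
  rw [le_div_iff₀ hD]
  calc (#{i | √D / 2 ≤ dist (x i) (y i)} : ℝ) * D
        = 4 * ∑ i ∈ {i | √D / 2 ≤ dist (x i) (y i)}, (√D / 2) ^ 2 := by
          rw [sum_const, nsmul_eq_mul, div_pow, Real.sq_sqrt hD.le]; ring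
    _ ≤ 4 * ∑ i ∈ {i | √D / 2 ≤ dist (x i) (y i)}, dist (x i) (y i) ^ 2 := by
          gcongr with i hi
          exact (mem_filter.1 hi).2
    _ ≤ 4 * ∑ i, dist (x i) (y i) ^ 2 := by gcongr; exact subset_univ _
    _ = 4 * frob (X - Y) ^ 2 := by simp only [hdist, frob_sq, Matrix.sub_apply]

lemma Mis_le_of_frob_sq_le {n d k : ℕ} {X Y : Matrix (Fin n) (Fin d) ℝ} (hX : IsKMM k X)
    {g : Fin n → Fin k} (hY : ∀ i i', g i = g i' → Y i = Y i') {D E : ℝ} (hD : 0 < D)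
    (hsep : ∀ i i', g i ≠ g i' → D ≤ ∑ j, (Y i j - Y i' j) ^ 2) (hE : frob (X - Y) ^ 2 ≤ E)
    {β : ℝ} (hβ : 0 < β) (hπ : ∀ a, 1 / β ≤ (#{i | g i = a} : ℝ) / n)
    (hlt : 4 * E / D / n < 1 / β) :
    Mis k X Y ≤ 4 * E / D / n := by
  set x := fun i => WithLp.toLp 2 (X i)
  set y := fun i => WithLp.toLp 2 (Y i)
  set S := ({i | √D / 2 ≤ dist (x i) (y i)} : Finset (Fin n))
  have hSE : (#S : ℝ) ≤ 4 * E / D := (card_far_rows_le X Y hD).trans (by gcongr)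
  have hSlt : ∀ a, (#S : ℝ) < #{i | g i = a} := fun a => by
    have hn : (0 : ℝ) < n := by exact_mod_cast pos_of_le_div (one_div_pos.2 hβ) (hπ a)
    calc (#S : ℝ) ≤ 4 * E / D / n * n := by rwa [div_mul_cancel₀ _ hn.ne']
      _ < 1 / β * n := by gcongr
      _ ≤ #{i | g i = a} := (le_div_iff₀ hn).1 (hπ a)
  have hrep : ∀ a, ∃ i ∉ (S : Set (Fin n)), g i = a := fun a => by
    obtain ⟨i, hi, hiS⟩ := exists_mem_notMem_of_card_lt_card (s := S) (t := {i | g i = a})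
      (by exact_mod_cast hSlt a)
    exact ⟨i, hiS, (mem_filter.1 hi).2⟩
  obtain ⟨g₀, hg₀⟩ := hX
  obtain ⟨g', hg', hg'g⟩ := exists_labeling_eq_of_dist_lt (x := x) (y := y)
    (fun i i' h => congrArg (WithLp.toLp 2) (hg₀ i i' h))
    (fun i i' h => by
      rw [dist_toLp_eq_sqrt_sum_sq]; exact Real.sqrt_le_sqrt (hsep i i' h))
    (fun i hi => by simpa [S] using hi) hrep
  have hXlab : IsLabeling X g' := fun i i' => (hg' i i').trans (WithLp.toLp_injective 2).eq_iff
  have hYlab : IsLabeling Y g := fun i i' =>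
    ⟨hY i i', fun h => by_contra fun hne => hD.not_ge (by simpa [h] using hsep i i' hne)⟩
  have hmis : Set.ncard {i | g' i ≠ g i} ≤ #S := by
    rw [← Set.ncard_coe_finset]
    exact Set.ncard_le_ncard (fun i hi => by_contra fun hiS => hi (hg'g i hiS))
  calc Mis k X Y ≤ (Set.ncard {i | g' i ≠ g i} : ℝ) / n := Mis_le_of_isLabeling hXlab hYlab
    _ ≤ #S / n := by gcongr
    _ ≤ 4 * E / D / n := by gcongr

end Clustering

section BlockModel

open Finset

lemma IsMembership.exists_eq_ite {n k : ℕ} {Z : Matrix (Fin n) (Fin k) ℝ} (hZ : IsMembership Z) :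
    ∃ g : Fin n → Fin k, ∀ i j, Z i j = if g i = j then 1 else 0 := by
  choose g hg hg' using hZ.2
  refine ⟨g, fun i j => ?_⟩
  split_ifs with h
  · exact h ▸ hg i
  · exact (hZ.1 i j).resolve_right fun h1 => h (hg' i j h1).symm

lemma clusterSize_eq_card {n k : ℕ} {Z : Matrix (Fin n) (Fin k) ℝ} {g : Fin n → Fin k}
    (hg : ∀ i j, Z i j = if g i = j then 1 else 0) (j : Fin k) :
    clusterSize Z j = #{i | g i = j} := by
  rw [clusterSize, ← Set.ncard_coe_finset]
  congr
  ext i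
  simp [hg]

lemma mul_mul_transpose_apply_of_eq_ite {ι ι' α β R : Type*} [Fintype α] [Fintype β]
    [DecidableEq α] [DecidableEq β] [Semiring R] {Z₁ : Matrix ι α R} {Z₂ : Matrix ι' β R}
    {g₁ : ι → α} {g₂ : ι' → β} (h₁ : ∀ i j, Z₁ i j = if g₁ i = j then 1 else 0)
    (h₂ : ∀ i j, Z₂ i j = if g₂ i = j then 1 else 0) (B : Matrix α β R) (i : ι) (ℓ : ι') :
    (Z₁ * B * Z₂ᵀ) i ℓ = B (g₁ i) (g₂ ℓ) := by
  simp [mul_apply, h₁, h₂]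

lemma rank_mul_mul_le_min {m n k₁ k₂ : ℕ} (Z₁ : Matrix (Fin m) (Fin k₁) ℝ)
    (B : Matrix (Fin k₁) (Fin k₂) ℝ) (Z₂ : Matrix (Fin k₂) (Fin n) ℝ) :
    (Z₁ * B * Z₂).rank ≤ min k₁ k₂ :=
  ((rank_mul_le_left _ _).trans (rank_mul_le_right _ _)).trans
    (le_min (rank_le_height B) (rank_le_width B))

lemma sum_sq_card_fiber_mul_le {ι α : Type*} [Fintype ι] [Fintype α] [DecidableEq α]
    (g : ι → α) (f : α → ℝ) :
    ∑ a, (#{i | g i = a} * f a) ^ 2 ≤ Fintype.card ι * ∑ i, f (g i) ^ 2 := by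
  rw [← sum_fiberwise' univ g (fun a => f a ^ 2), mul_sum]
  refine sum_le_sum fun a _ => ?_
  have hcard : (#{i | g i = a} : ℝ) ≤ Fintype.card ι := by exact_mod_cast card_le_univ _
  rw [sum_const, nsmul_eq_mul, mul_pow, sq (#{i | g i = a} : ℝ), mul_assoc]
  gcongr

lemma le_sSup_entries {ι α : Type*} [Finite ι] [Finite α] (A : ι → α → ℝ) (s : ι) (ℓ : α) :
    A s ℓ ≤ sSup {v | ∃ s ℓ, v = A s ℓ} :=
  le_csSup ((Set.finite_range fun p : ι × α => A p.1 p.2).subset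
    (by rintro _ ⟨s, ℓ, rfl⟩; exact ⟨(s, ℓ), rfl⟩)).bddAbove ⟨s, ℓ, rfl⟩

lemma mul_sSup_entries_le {ι α : Type*} {A : ι → α → ℝ} {a b : ℝ} (ha : 0 ≤ a) (hb : 0 ≤ b)
    (h : ∀ s ℓ, a * A s ℓ ≤ b) : a * sSup {v | ∃ s ℓ, v = A s ℓ} ≤ b := by
  rw [← smul_eq_mul, ← Real.sSup_smul_of_nonneg ha]
  exact Real.sSup_le (by rintro _ ⟨_, ⟨s, ℓ, rfl⟩, rfl⟩; exact h s ℓ) hb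

lemma sInf_sqDist_rows_le {k₁ k₂ : ℕ} (Λ : Matrix (Fin k₁) (Fin k₂) ℝ) {s t : Fin k₁}
    (hst : s ≠ t) :
    sInf {v | ∃ s t : Fin k₁, s ≠ t ∧ v = ∑ ℓ, (Λ s ℓ - Λ t ℓ) ^ 2} ≤ ∑ ℓ, (Λ s ℓ - Λ t ℓ) ^ 2 :=
  csInf_le ⟨0, by rintro _ ⟨s, t, -, rfl⟩; positivity⟩ ⟨s, t, hst, rfl⟩

lemma sInf_sqDist_rows_le_mul_sum_sq {n₁ n₂ k₁ k₂ : ℕ} {P : Matrix (Fin n₁) (Fin n₂) ℝ}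
    {B Λ : Matrix (Fin k₁) (Fin k₂) ℝ} {g₁ : Fin n₁ → Fin k₁} {g₂ : Fin n₂ → Fin k₂}
    (hP : ∀ i ℓ', P i ℓ' = B (g₁ i) (g₂ ℓ')) (hΛ : ∀ s ℓ, Λ s ℓ = B s ℓ * #{ℓ' | g₂ ℓ' = ℓ})
    {i i' : Fin n₁} (h : g₁ i ≠ g₁ i') :
    sInf {v | ∃ s t : Fin k₁, s ≠ t ∧ v = ∑ ℓ, (Λ s ℓ - Λ t ℓ) ^ 2} ≤
      n₂ * ∑ ℓ', (P i ℓ' - P i' ℓ') ^ 2 :=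
  calc _ ≤ ∑ ℓ, (Λ (g₁ i) ℓ - Λ (g₁ i') ℓ) ^ 2 := sInf_sqDist_rows_le Λ h
    _ = ∑ ℓ, (#{ℓ' | g₂ ℓ' = ℓ} * (B (g₁ i) ℓ - B (g₁ i') ℓ)) ^ 2 :=
        sum_congr rfl fun ℓ _ => by rw [hΛ, hΛ]; ring
    _ ≤ Fintype.card (Fin n₂) * ∑ ℓ', (B (g₁ i) (g₂ ℓ') - B (g₁ i') (g₂ ℓ')) ^ 2 :=
        sum_sq_card_fiber_mul_le g₂ _
    _ = n₂ * ∑ ℓ', (P i ℓ' - P i' ℓ') ^ 2 := by simp only [Fintype.card_fin, hP]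

-- `sInf ∅ = 0` in `ℝ`, and every squared distance vanishes when there are no columns
lemma pos_of_sInf_sqDist_rows_pos {k₁ k₂ : ℕ} {Λ : Matrix (Fin k₁) (Fin k₂) ℝ}
    (h : 0 < sInf {v | ∃ s t : Fin k₁, s ≠ t ∧ v = ∑ ℓ, (Λ s ℓ - Λ t ℓ) ^ 2}) :
    0 < k₁ ∧ 0 < k₂ := by
  by_contra hk
  refine h.not_ge (Real.sInf_nonpos ?_)
  rintro _ ⟨s, t, -, rfl⟩
  rcases Nat.eq_zero_or_pos k₁ with rfl | hk₁
  · exact s.elim0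
  · obtain rfl : k₂ = 0 := by omega
    simp

lemma sqrt_div_eq_mul_inv_sqrt_mul {n₁ n₂ : ℝ} (hn₁ : 0 ≤ n₁) (hn₂ : 0 < n₂) :
    √(n₂ / n₁) = n₂ * (√(n₁ * n₂))⁻¹ := by
  have : 0 < √n₂ := Real.sqrt_pos.2 hn₂
  rw [Real.sqrt_div' _ hn₁, Real.sqrt_mul hn₁]
  field_simp
  rw [Real.sq_sqrt hn₂.le]

lemma sqrt_div_mul_le_mul_abs {n₁ n₂ N β ψ : ℝ} (hn₁ : 0 ≤ n₁) (hn₂ : 0 < n₂) (hβ : 0 < β)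
    (hN : 1 / β ≤ N / n₂) : √(n₂ / n₁) * ψ ≤ β * |(√(n₁ * n₂))⁻¹ * ψ * N| := by
  have hN' : n₂ ≤ β * N := by
    rw [div_le_div_iff₀ hβ hn₂] at hN; linarith
  have hN0 : 0 ≤ N := by nlinarith
  rw [sqrt_div_eq_mul_inv_sqrt_mul hn₁ hn₂, abs_mul, abs_mul,
    abs_of_nonneg (by positivity : 0 ≤ (√(n₁ * n₂))⁻¹), abs_of_nonneg hN0]
  calc n₂ * (√(n₁ * n₂))⁻¹ * ψ ≤ n₂ * (√(n₁ * n₂))⁻¹ * |ψ| := by gcongr; exact le_abs_self ψ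
    _ ≤ β * N * (√(n₁ * n₂))⁻¹ * |ψ| := by gcongr
    _ = _ := by ring

lemma sqrt_div_mul_sSup_entries_le {k₁ k₂ : ℕ} {n₁ n₂ β : ℝ} (hn₁ : 0 ≤ n₁) (hn₂ : 0 < n₂)
    (hβ : 0 < β) {Ψ Λ : Matrix (Fin k₁) (Fin k₂) ℝ} {N : Fin k₂ → ℝ} (hN : ∀ ℓ, 1 / β ≤ N ℓ / n₂)
    (hΛ : ∀ s ℓ, Λ s ℓ = (√(n₁ * n₂))⁻¹ * Ψ s ℓ * N ℓ) :
    √(n₂ / n₁) * sSup {v | ∃ s ℓ, v = Ψ s ℓ} ≤ β * sSup {v | ∃ s ℓ, v = |Λ s ℓ|} :=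
  mul_sSup_entries_le (Real.sqrt_nonneg _)
    (mul_nonneg hβ.le (Real.sSup_nonneg (by rintro _ ⟨s, ℓ, rfl⟩; positivity)))
    fun s ℓ => (sqrt_div_mul_le_mul_abs hn₁ hn₂ hβ (hN ℓ)).trans
      (by rw [← hΛ]; gcongr; exact le_sSup_entries (fun s ℓ => |Λ s ℓ|) s ℓ)

end BlockModel

theorem stmt15_general (n1 n2 k1 k2 : ℕ)
    (Z1 : Matrix (Fin n1) (Fin k1) ℝ) (Z2 : Matrix (Fin n2) (Fin k2) ℝ)
    (hZ1 : IsMembership Z1) (hZ2 : IsMembership Z2)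
    (Ψ : Matrix (Fin k1) (Fin k2) ℝ)
    (P : Matrix (Fin n1) (Fin n2) ℝ)
    (hP : P = Z1 * ((Real.sqrt ((n1 : ℝ) * n2))⁻¹ • Ψ) * Z2ᵀ)
    (β1 β2 : ℝ) (hβ1 : 1 ≤ β1) (hβ2 : 1 ≤ β2)
    (hπ1 : ∀ t : Fin k1, 1 / (β1 * k1) ≤ (clusterSize Z1 t : ℝ) / n1)
    (hπ2 : ∀ s : Fin k2, 1 / (β2 * k2) ≤ (clusterSize Z2 s : ℝ) / n2)
    (Λ : Matrix (Fin k1) (Fin k2) ℝ)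
    (hΛ : ∀ s ℓ, Λ s ℓ = (Real.sqrt ((n1 : ℝ) * n2))⁻¹ * Ψ s ℓ * (clusterSize Z2 ℓ : ℝ))
    (ΛInf : ℝ) (hΛInf : ΛInf = sSup {v | ∃ s ℓ, v = |Λ s ℓ|})
    (ΛSep : ℝ)
    (hΛSep : ΛSep = sInf {v | ∃ s t : Fin k1, s ≠ t ∧ v = ∑ ℓ, (Λ s ℓ - Λ t ℓ) ^ 2})
    (dd : ℝ) (hdd : dd = Real.sqrt ((n2 : ℝ) / n1) * sSup {v | ∃ s ℓ, v = Ψ s ℓ})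
    (C : ℝ)
    (Are : Matrix (Fin n1) (Fin n2) ℝ) (hcon : opNorm (Are - P) ≤ C * Real.sqrt dd)
    (M : Matrix (Fin n1) (Fin n2) ℝ)
    (hMrank : M.rank ≤ min k1 k2)
    (hMbest : opNorm (M - Are) ≤ svalSucc Are (min k1 k2))
    (κ : ℝ) (hκ : 1 ≤ κ)
    (hcond : 32 * C ^ 2 * (1 + κ) ^ 2 * β1 * β2 * (min k1 k2) * k1 * k2 *
      ((n2 : ℝ) / n1) * ΛInf < ΛSep) :
    ∀ Xt : Matrix (Fin n1) (Fin n2) ℝ, IsKApprox k1 κ M Xt →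
      Mis k1 Xt P ≤
        32 * C ^ 2 * (1 + κ) ^ 2 * β2 * (min k1 k2) * k2 * ((n2 : ℝ) / n1) * ΛInf / ΛSep := by
  intro Xt hXt
  obtain ⟨g1, hg1⟩ := hZ1.exists_eq_ite
  obtain ⟨g2, hg2⟩ := hZ2.exists_eq_ite
  have hΛInf0 : 0 ≤ ΛInf := hΛInf ▸ Real.sSup_nonneg (by rintro _ ⟨s, ℓ, rfl⟩; positivity)
  have hSep : 0 < ΛSep := lt_of_le_of_lt (by positivity) hcond
  obtain ⟨hk1, hk2⟩ := pos_of_sInf_sqDist_rows_pos (hΛSep ▸ hSep)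
  have hn1 : (0 : ℝ) < n1 := by exact_mod_cast pos_of_le_div (by positivity) (hπ1 ⟨0, hk1⟩)
  have hn2 : (0 : ℝ) < n2 := by exact_mod_cast pos_of_le_div (by positivity) (hπ2 ⟨0, hk2⟩)
  have hPe := mul_mul_transpose_apply_of_eq_ite hg1 hg2 ((Real.sqrt ((n1 : ℝ) * n2))⁻¹ • Ψ)
  rw [← hP] at hPe
  have hProws : ∀ i i', g1 i = g1 i' → P i = P i' := fun i i' h =>
    funext fun ℓ' => by rw [hPe, hPe, h]
  have hsep : ∀ i i', g1 i ≠ g1 i' → ΛSep / n2 ≤ ∑ ℓ', (P i ℓ' - P i' ℓ') ^ 2 := fun i i' h => by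
    rw [div_le_iff₀' hn2, hΛSep]
    exact sInf_sqDist_rows_le_mul_sum_sq hPe
      (fun s ℓ => by rw [hΛ, clusterSize_eq_card hg2, Matrix.smul_apply, smul_eq_mul]) h
  have hop : opNorm (Are - P) ^ 2 ≤ C ^ 2 * (β2 * k2 * ΛInf) :=
    sq_le_mul_of_le_mul_sqrt (opNorm_nonneg _) hcon (hdd ▸ hΛInf ▸
      sqrt_div_mul_sSup_entries_le hn1.le hn2 (by positivity) hπ2 hΛ) (by positivity)
  have hE := frob_sq_sub_le_of_isKApprox (by linarith) hMrank hMbest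
    (hP ▸ rank_mul_mul_le_min _ _ _) ⟨g1, hProws⟩ hXt
  have hRHS : 4 * (8 * (1 + κ) ^ 2 * (min k1 k2) * (C ^ 2 * (β2 * k2 * ΛInf))) / (ΛSep / n2) / n1 =
      32 * C ^ 2 * (1 + κ) ^ 2 * β2 * (min k1 k2) * k2 * ((n2 : ℝ) / n1) * ΛInf / ΛSep := by
    field_simp; ring
  refine (Mis_le_of_frob_sq_le hXt.1 hProws (by positivity) hsep (hE.trans (by gcongr))
    (by positivity) (fun a => clusterSize_eq_card hg1 a ▸ hπ1 a) ?_).trans_eq hRHS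
  rw [hRHS, lt_div_iff₀ (by positivity), div_mul_eq_mul_div, div_lt_one hSep]
  linarith

/-- Corollary 5.1 (deterministic form of the mean-parameter corollary for SC-RR).
`Λ` collects the row mean parameters `Λ_{sℓ} = B_{sℓ} n_{2ℓ}`, `ΛInf = ‖Λ‖_∞`,
`ΛSep = Λ∧²` is the minimum squared row separation of `Λ`, and
`dd = √(n2/n1)·‖Ψ‖_∞`. -/
theorem stmt15 (n1 n2 k1 k2 : ℕ)
    (Z1 : Matrix (Fin n1) (Fin k1) ℝ) (Z2 : Matrix (Fin n2) (Fin k2) ℝ)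
    (hZ1 : IsMembership Z1) (hZ2 : IsMembership Z2)
    (hpos1 : ∀ j, 0 < clusterSize Z1 j) (hpos2 : ∀ j, 0 < clusterSize Z2 j)
    (Ψ : Matrix (Fin k1) (Fin k2) ℝ) (hΨ : ∀ s ℓ, 0 ≤ Ψ s ℓ)
    (P : Matrix (Fin n1) (Fin n2) ℝ)
    (hP : P = Z1 * ((Real.sqrt ((n1 : ℝ) * n2))⁻¹ • Ψ) * Z2ᵀ)
    (β1 β2 : ℝ) (hβ1 : 1 ≤ β1) (hβ2 : 1 ≤ β2)
    (hπ1 : ∀ t : Fin k1, 1 / (β1 * k1) ≤ (clusterSize Z1 t : ℝ) / n1)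
    (hπ2 : ∀ s : Fin k2, 1 / (β2 * k2) ≤ (clusterSize Z2 s : ℝ) / n2)
    (Λ : Matrix (Fin k1) (Fin k2) ℝ)
    (hΛ : ∀ s ℓ, Λ s ℓ = (Real.sqrt ((n1 : ℝ) * n2))⁻¹ * Ψ s ℓ * (clusterSize Z2 ℓ : ℝ))
    (ΛInf : ℝ) (hΛInf : ΛInf = sSup {v | ∃ s ℓ, v = |Λ s ℓ|})
    (ΛSep : ℝ)
    (hΛSep : ΛSep = sInf {v | ∃ s t : Fin k1, s ≠ t ∧ v = ∑ ℓ, (Λ s ℓ - Λ t ℓ) ^ 2})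
    (dd : ℝ) (hdd : dd = Real.sqrt ((n2 : ℝ) / n1) * sSup {v | ∃ s ℓ, v = Ψ s ℓ})
    (C : ℝ) (hC : 0 < C)
    (Are : Matrix (Fin n1) (Fin n2) ℝ) (hcon : opNorm (Are - P) ≤ C * Real.sqrt dd)
    (M : Matrix (Fin n1) (Fin n2) ℝ)
    (hMrank : M.rank ≤ min k1 k2)
    (hMbest : opNorm (M - Are) ≤ svalSucc Are (min k1 k2))
    (κ : ℝ) (hκ : 1 ≤ κ)
    (hcond : 32 * C ^ 2 * (1 + κ) ^ 2 * β1 * β2 * (min k1 k2) * k1 * k2 *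
      ((n2 : ℝ) / n1) * ΛInf < ΛSep) :
    ∀ Xt : Matrix (Fin n1) (Fin n2) ℝ, IsKApprox k1 κ M Xt →
      Mis k1 Xt P ≤
        32 * C ^ 2 * (1 + κ) ^ 2 * β2 * (min k1 k2) * k2 * ((n2 : ℝ) / n1) * ΛInf / ΛSep :=
  stmt15_general n1 n2 k1 k2 Z1 Z2 hZ1 hZ2 Ψ P hP β1 β2 hβ1 hβ2 hπ1 hπ2 Λ hΛ ΛInf hΛInf ΛSep hΛSep
    dd hdd C Are hcon M hMrank hMbest κ hκ hcond

end
end
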